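/- arXiv:1408.4685 — 7 statements merged into one kernel-verified Lean document; each statement's English description precedes it below -/
import Mathlib

section
/- Let C be a convex cone, s ∈ C*, and x ∈ relint(C). Then s ∈ C* \ C^⊥ if and only if ⟨s, x⟩ > 0. -/
open RealInnerProductSpace

theorem dualCone_not_perp_iff_pos_inner
    {E : Type*} [NormedAddCommGroup E] [InnerProductSpace ℝ E]
    [FiniteDimensional ℝ E]
    (C : ConvexCone ℝ E) (s x : E)
    (hs : ∀ y ∈ C, 0 ≤ ⟪s, y⟫)
    (hx : x ∈ intrinsicInterior ℝ (C : Set E)) :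
    s ∉ (Submodule.span ℝ (C : Set E))ᗮ ↔ 0 < ⟪s, x⟫ := by
  have hxC : x ∈ (C : Set E) := intrinsicInterior_subset hx
  constructor
  · intro hnp
    by_contra hle
    push_neg at hle
    have hx0 : ⟪s, x⟫ = 0 := le_antisymm hle (hs x hxC)
    apply hnp
    rw [Submodule.mem_orthogonal']
    intro u hu
    -- first show inner vanishes on C
    have key : ∀ y ∈ (C : Set E), ⟪s, y⟫ = 0 := by
      intro y hy
      refine le_antisymm ?_ (hs y hy)
      -- x in intrinsic interior: get a point x + ε (x - y) ∈ C
      obtain ⟨x', hx', hxx⟩ := mem_intrinsicInterior.mp hx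
      have hyspan : y ∈ affineSpan ℝ (C : Set E) := subset_affineSpan ℝ _ hy
      have hv : x - y ∈ (affineSpan ℝ (C : Set E)).direction :=
        AffineSubspace.vsub_mem_direction (subset_affineSpan ℝ _ hxC) hyspan
      have hxA : x ∈ affineSpan ℝ (C : Set E) := subset_affineSpan ℝ _ hxC
      -- the curve t ↦ x + t (x - y) inside the affine span
      let f : ℝ → affineSpan ℝ (C : Set E) := fun t =>
        ⟨t • (x - y) + x,
          AffineSubspace.vadd_mem_of_mem_direction
            (Submodule.smul_mem _ t hv) hxA⟩
      have hfc : Continuous f := by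
        apply continuous_induced_rng.mpr
        show Continuous fun t : ℝ => t • (x - y) + x
        fun_prop
      have hf0 : f 0 = x' := by
        apply Subtype.ext
        show (0:ℝ) • (x - y) + x = (x' : E)
        rw [zero_smul, zero_add, hxx]
      have hnhds : f ⁻¹' interior ((↑) ⁻¹' (C : Set E) : Set (affineSpan ℝ (C : Set E))) ∈ nhds (0 : ℝ) := by
        apply (isOpen_interior.preimage hfc).mem_nhds
        simp only [Set.mem_preimage, hf0]
        exact hx'
      obtain ⟨δ, hδpos, hδ⟩ := Metric.mem_nhds_iff.mp hnhds
      set ε := δ / 2 with hε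
      have hεpos : 0 < ε := by positivity
      have hmem : f ε ∈ interior ((↑) ⁻¹' (C : Set E) : Set (affineSpan ℝ (C : Set E))) := by
        apply hδ
        simp only [Metric.mem_ball, Real.dist_eq, sub_zero, abs_of_pos hεpos]
        linarith
      have hmemC : ε • (x - y) + x ∈ (C : Set E) := by
        have := interior_subset hmem
        simpa [hxx] using this
      have h0 : (0:ℝ) ≤ ⟪s, ε • (x - y) + x⟫ := hs _ hmemC
      rw [inner_add_right, real_inner_smul_right, inner_sub_right, hx0] at h0
      nlinarith
    -- extend to the span
    induction hu using Submodule.span_induction with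
    | mem z hz => exact key z hz
    | zero => simp
    | add a b _ _ ha hb => rw [inner_add_right, ha, hb]; ring
    | smul c a _ ha => rw [real_inner_smul_right, ha]; ring
  · intro hpos hperp
    have : ⟪s, x⟫ = 0 := by
      rw [Submodule.mem_orthogonal'] at hperp
      exact hperp x (Submodule.subset_span hxC)
    linarith
end

section
/- Let U ∈ ℝ^{n×d} and let F = { U X Uᵀ : X ∈ S^d_+ }. Suppose S ∈ S^n satisfies Uᵀ S U ⪰ 0, and B ∈ ℝ^{d×r} satisfies range(B) = null(Uᵀ S U). Then F ∩ S^⊥ = { U B W Bᵀ Uᵀ : W ∈ S^r_+ }. -/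
/-!
Put `A = Uᵀ S U`, so that `tr (S (U X Uᵀ)) = tr (A X)`. Writing a PSD `X` as `Y Yᵀ`, the
trace `tr (A X) = tr (Yᵀ A Y)` of a PSD matrix vanishes only if `A Y = 0` (as `A` is PSD), i.e.
the columns of `Y` lie in `ker A = range B`; then `Y = B C` and `X = B (C Cᵀ) Bᵀ`. Conversely
`A B = 0` makes every `B W Bᵀ` orthogonal to `A`.
-/

open Matrix

namespace Matrix

section Semiring

variable {R : Type*} [CommSemiring R] {l m n p : Type*} [Fintype n]

theorem range_mulVecLin_le_ker_mulVecLin_iff [Fintype m] (A : Matrix l m R) (B : Matrix m n R) :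
    LinearMap.range B.mulVecLin ≤ LinearMap.ker A.mulVecLin ↔ A * B = 0 := by
  classical
  rw [LinearMap.range_le_ker_iff, ← mulVecLin_mul, ← toLin'_apply', ← map_zero toLin',
    toLin'.injective.eq_iff]

theorem exists_eq_mul_of_range_mulVecLin_le [Fintype p] {Y : Matrix m p R} {B : Matrix m n R}
    (h : LinearMap.range Y.mulVecLin ≤ LinearMap.range B.mulVecLin) :
    ∃ C : Matrix n p R, Y = B * C := by
  classical
  have hcol (j : p) : ∃ c, B *ᵥ c = Y.col j := by
    simpa [mulVec_single_one] using h (LinearMap.mem_range_self Y.mulVecLin (Pi.single j 1))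
  choose c hc using hcol
  refine ⟨(of c)ᵀ, ?_⟩
  ext i j
  simpa [mul_apply, mulVec, dotProduct] using (congrFun (hc j) i).symm

end Semiring

open scoped ComplexOrder

namespace PosSemidef

variable {𝕜 : Type*} [RCLike 𝕜] {m n r : Type*} [Fintype m] [Fintype n] [Fintype r]

theorem exists_eq_conjTranspose_mul_self {A : Matrix n n 𝕜} (hA : A.PosSemidef) :
    ∃ P : Matrix n n 𝕜, A = Pᴴ * P := by
  classical
  open MatrixOrder in exact CStarAlgebra.nonneg_iff_eq_star_mul_self.mp hA.nonneg

theorem trace_conjTranspose_mul_mul_eq_zero_iff {A : Matrix n n 𝕜} (hA : A.PosSemidef)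
    (Y : Matrix n m 𝕜) : (Yᴴ * A * Y).trace = 0 ↔ A * Y = 0 := by
  obtain ⟨P, rfl⟩ := hA.exists_eq_conjTranspose_mul_self
  rw [show Yᴴ * (Pᴴ * P) * Y = (P * Y)ᴴ * (P * Y) by
      simp only [conjTranspose_mul, Matrix.mul_assoc],
    trace_conjTranspose_mul_self_eq_zero_iff, conjTranspose_mul_self_mul_eq_zero]

theorem exists_eq_mul_mul_conjTranspose_of_trace_mul_eq_zero
    {A X : Matrix n n 𝕜} (hA : A.PosSemidef) (hX : X.PosSemidef) (hAX : (A * X).trace = 0)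
    {B : Matrix n r 𝕜} (hB : LinearMap.ker A.mulVecLin ≤ LinearMap.range B.mulVecLin) :
    ∃ W : Matrix r r 𝕜, W.PosSemidef ∧ X = B * W * Bᴴ := by
  obtain ⟨P, rfl⟩ := hX.exists_eq_conjTranspose_mul_self
  have hAP : A * Pᴴ = 0 := by
    rwa [← hA.trace_conjTranspose_mul_mul_eq_zero_iff, conjTranspose_conjTranspose,
      trace_mul_cycle, trace_mul_comm]
  obtain ⟨C, hC⟩ := exists_eq_mul_of_range_mulVecLin_le
    (((range_mulVecLin_le_ker_mulVecLin_iff A Pᴴ).mpr hAP).trans hB)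
  refine ⟨C * Cᴴ, posSemidef_self_mul_conjTranspose C, ?_⟩
  rw [← conjTranspose_conjTranspose P, hC]
  simp only [conjTranspose_mul, conjTranspose_conjTranspose, Matrix.mul_assoc]

end PosSemidef

end Matrix

theorem face_inter_perp_eq_general
    {n d r : ℕ} (U : Matrix (Fin n) (Fin d) ℝ)
    (S : Matrix (Fin n) (Fin n) ℝ)
    (hSU : (Uᵀ * S * U).PosSemidef)
    (B : Matrix (Fin d) (Fin r) ℝ)
    (hB : LinearMap.range B.mulVecLin = LinearMap.ker (Uᵀ * S * U).mulVecLin) :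
    {M : Matrix (Fin n) (Fin n) ℝ |
        (∃ X : Matrix (Fin d) (Fin d) ℝ, X.PosSemidef ∧ M = U * X * Uᵀ) ∧
        (S * M).trace = 0} =
    {M : Matrix (Fin n) (Fin n) ℝ |
        ∃ W : Matrix (Fin r) (Fin r) ℝ, W.PosSemidef ∧
          M = U * B * W * Bᵀ * Uᵀ} := by
  have trace_eq (X : Matrix (Fin d) (Fin d) ℝ) :
      (S * (U * X * Uᵀ)).trace = (Uᵀ * S * U * X).trace := by
    rw [← Matrix.mul_assoc, trace_mul_cycle, ← Matrix.mul_assoc]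
  have hAB : Uᵀ * S * U * B = 0 := (range_mulVecLin_le_ker_mulVecLin_iff _ B).mp hB.le
  ext M
  constructor
  · rintro ⟨⟨X, hX, rfl⟩, hSX⟩
    obtain ⟨W, hW, rfl⟩ := hSU.exists_eq_mul_mul_conjTranspose_of_trace_mul_eq_zero hX
      (trace_eq X ▸ hSX) hB.ge
    exact ⟨W, hW, by simp only [conjTranspose_eq_transpose_of_trivial, Matrix.mul_assoc]⟩
  · rintro ⟨W, hW, rfl⟩
    refine ⟨⟨B * W * Bᵀ, ?_, by simp only [Matrix.mul_assoc]⟩, ?_⟩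
    · simpa only [conjTranspose_eq_transpose_of_trivial] using hW.mul_mul_conjTranspose_same B
    · rw [show U * B * W * Bᵀ * Uᵀ = U * (B * W * Bᵀ) * Uᵀ by simp only [Matrix.mul_assoc],
        trace_eq, ← Matrix.mul_assoc, ← Matrix.mul_assoc, hAB, Matrix.zero_mul, Matrix.zero_mul,
        trace_zero]

theorem face_inter_perp_eq
    {n d r : ℕ} (U : Matrix (Fin n) (Fin d) ℝ)
    (S : Matrix (Fin n) (Fin n) ℝ) (hS : S.IsSymm)
    (hSU : (Uᵀ * S * U).PosSemidef)
    (B : Matrix (Fin d) (Fin r) ℝ)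
    (hB : LinearMap.range B.mulVecLin = LinearMap.ker (Uᵀ * S * U).mulVecLin) :
    {M : Matrix (Fin n) (Fin n) ℝ |
        (∃ X : Matrix (Fin d) (Fin d) ℝ, X.PosSemidef ∧ M = U * X * Uᵀ) ∧
        (S * M).trace = 0} =
    {M : Matrix (Fin n) (Fin n) ℝ |
        ∃ W : Matrix (Fin r) (Fin r) ℝ, W.PosSemidef ∧
          M = U * B * W * Bᵀ * Uᵀ} :=
  face_inter_perp_eq_general U S hSU B hB
end

section
/- Let W = {W_1, ..., W_m} be a finite set of d×k real matrices and let C(W)* = { Σᵢ Wᵢ Xᵢ Wᵢᵀ : Xᵢ ∈ S^k_+ }. Then C(W)* is a closed convex cone, and its dual cone equals C(W) := { X ∈ S^d : Wᵢᵀ X Wᵢ ⪰ 0 for all i }. Moreover C(W)* ⊆ S^d_+ ⊆ C(W). -/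
/-!
Writing each `Xᵢ ⪰ 0` as `Bᵢ Bᵢᵀ`, the cone `C(W)*` is the image of the map `C ↦ ∑ᵢ Cᵢ Cᵢᵀ` on
the space of tuples with `Cᵢ` in the column space of `Wᵢ`. Since `tr (∑ᵢ Cᵢ Cᵢᵀ) = ∑ᵢ ‖Cᵢ‖²`
(Frobenius norm), this map is proper, so its image is closed. The dual cone is computed from
`tr (Y Wᵢ X Wᵢᵀ) = tr (Wᵢᵀ Y Wᵢ X)` and the self-duality of the PSD cone.
-/

open Matrix
open scoped MatrixOrder

theorem isProperMap_of_norm_le {E Y : Type*} [SeminormedAddCommGroup E] [ProperSpace E]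
    [TopologicalSpace Y] [T2Space Y] [CompactlyCoherentSpace Y] {F : E → Y} {g : Y → ℝ}
    (hF : Continuous F) (hg : Continuous g) (hFg : ∀ x, ‖x‖ ≤ g (F x)) : IsProperMap F := by
  refine isProperMap_iff_isCompact_preimage.2 ⟨hF, fun K hK => ?_⟩
  obtain ⟨M, hM⟩ := (hK.image hg).bddAbove
  refine (isCompact_closedBall 0 M).of_isClosed_subset (hK.isClosed.preimage hF) fun x hx => ?_
  exact mem_closedBall_zero_iff.2 ((hFg x).trans (hM ⟨F x, hx, rfl⟩))

namespace Matrix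

section PosSemidef

variable {n p : Type*} [Fintype n] [Fintype p]

theorem trace_mul_mul_mul_transpose {R : Type*} [CommRing R] (Y : Matrix n n R)
    (W : Matrix n p R) (X : Matrix p p R) : (Y * (W * X * Wᵀ)).trace = (Wᵀ * Y * W * X).trace := by
  rw [← Matrix.mul_assoc, ← Matrix.mul_assoc, trace_mul_comm]
  simp only [Matrix.mul_assoc]

theorem posSemidef_mul_transpose_self (B : Matrix n p ℝ) : (B * Bᵀ).PosSemidef := by
  simpa using posSemidef_self_mul_conjTranspose B

theorem PosSemidef.transpose_mul_mul_same {A : Matrix n n ℝ} (hA : A.PosSemidef)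
    (B : Matrix n p ℝ) : (Bᵀ * A * B).PosSemidef := by
  simpa using hA.conjTranspose_mul_mul_same B

theorem PosSemidef.exists_eq_mul_transpose {A : Matrix n n ℝ} (hA : A.PosSemidef) :
    ∃ B : Matrix n n ℝ, A = B * Bᵀ := by
  classical
  obtain ⟨B, rfl⟩ := CStarAlgebra.nonneg_iff_eq_star_mul_self.mp hA.nonneg
  exact ⟨Bᵀ, by simp [star_eq_conjTranspose]⟩

theorem PosSemidef.trace_mul_nonneg {A B : Matrix n n ℝ} (hA : A.PosSemidef)
    (hB : B.PosSemidef) : 0 ≤ (A * B).trace := by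
  obtain ⟨C, rfl⟩ := hB.exists_eq_mul_transpose
  rw [← Matrix.mul_assoc, trace_mul_comm, ← Matrix.mul_assoc]
  exact (hA.transpose_mul_mul_same C).trace_nonneg

theorem posSemidef_iff_forall_trace_mul_nonneg {A : Matrix n n ℝ} (hA : A.IsSymm) :
    A.PosSemidef ↔ ∀ X : Matrix n n ℝ, X.PosSemidef → 0 ≤ (A * X).trace := by
  refine ⟨fun hA X hX => hA.trace_mul_nonneg hX, fun h => ?_⟩
  refine .of_dotProduct_mulVec_nonneg (isHermitian_iff_isSymm.2 hA) fun x => ?_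
  have hx := h _ (posSemidef_vecMulVec_self_star x)
  rwa [star_trivial, mul_vecMulVec, trace_vecMulVec, dotProduct_comm] at hx

end PosSemidef

variable {ι n p : Type*} [Fintype ι] [Fintype p]

/-- The cone `C(W)* = ∑ᵢ Wᵢ S₊ Wᵢᵀ`. -/
def psdCongrCone (W : ι → Matrix n p ℝ) : PointedCone ℝ (Matrix n n ℝ) where
  carrier := {X | ∃ Xi : ι → Matrix p p ℝ, (∀ i, (Xi i).PosSemidef) ∧ X = ∑ i, W i * Xi i * (W i)ᵀ}
  zero_mem' := ⟨0, fun _ => .zero, by simp⟩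
  add_mem' := by
    rintro _ _ ⟨Xi, hXi, rfl⟩ ⟨Yi, hYi, rfl⟩
    exact ⟨Xi + Yi, fun i => (hXi i).add (hYi i),
      by simp [Matrix.mul_add, Matrix.add_mul, Finset.sum_add_distrib]⟩
  smul_mem' := by
    rintro c _ ⟨Xi, hXi, rfl⟩
    exact ⟨c • Xi, fun i => (hXi i).smul c.2, by simp [Finset.smul_sum]⟩

variable (W : ι → Matrix n p ℝ)

theorem mul_mul_transpose_mem_psdCongrCone (i : ι) {X : Matrix p p ℝ} (hX : X.PosSemidef) :
    W i * X * (W i)ᵀ ∈ psdCongrCone W := by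
  classical
  refine ⟨Pi.single i X, fun j => ?_, ?_⟩
  · rcases eq_or_ne j i with rfl | hj
    · simpa using hX
    · simpa [hj] using PosSemidef.zero
  · rw [Fintype.sum_eq_single i fun j hj => by simp [hj]]
    simp

def piRangeMulLeft : Submodule ℝ (ι → Matrix n p ℝ) :=
  Submodule.pi Set.univ fun i => LinearMap.range (mulLeftLinearMap p ℝ (W i))

theorem range_sum_mul_transpose_piRangeMulLeft :
    Set.range (fun C : piRangeMulLeft W => ∑ i, C.1 i * (C.1 i)ᵀ) = psdCongrCone W := by
  ext X
  constructor
  · rintro ⟨⟨C, hC⟩, rfl⟩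
    choose B hB using fun i => hC i (Set.mem_univ i)
    refine ⟨fun i => B i * (B i)ᵀ, fun i => posSemidef_mul_transpose_self _, ?_⟩
    simp [← hB, transpose_mul, Matrix.mul_assoc]
  · rintro ⟨Xi, hXi, rfl⟩
    choose B hB using fun i => (hXi i).exists_eq_mul_transpose
    refine ⟨⟨fun i => W i * B i, fun i _ => ⟨B i, rfl⟩⟩, ?_⟩
    simp [hB, transpose_mul, Matrix.mul_assoc]

variable [Fintype n]

theorem posSemidef_of_mem_psdCongrCone {X : Matrix n n ℝ} (hX : X ∈ psdCongrCone W) :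
    X.PosSemidef := by
  obtain ⟨Xi, hXi, rfl⟩ := hX
  exact posSemidef_sum _ fun i _ => by simpa using (hXi i).mul_mul_conjTranspose_same (W i)

theorem forall_psdCongrCone_trace_mul_nonneg_iff {Y : Matrix n n ℝ} (hY : Y.IsSymm) :
    (∀ X ∈ psdCongrCone W, 0 ≤ (Y * X).trace) ↔ ∀ i, ((W i)ᵀ * Y * W i).PosSemidef := by
  have hsymm (i : ι) : ((W i)ᵀ * Y * W i).IsSymm := by
    simp [IsSymm, transpose_mul, hY.eq, Matrix.mul_assoc]
  simp_rw [posSemidef_iff_forall_trace_mul_nonneg (hsymm _), ← trace_mul_mul_mul_transpose]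
  refine ⟨fun h i X hX => h _ (mul_mul_transpose_mem_psdCongrCone W i hX), ?_⟩
  rintro h _ ⟨Xi, hXi, rfl⟩
  rw [Matrix.mul_sum, trace_sum]
  exact Finset.sum_nonneg fun i _ => h i _ (hXi i)

section Frobenius

attribute [local instance] frobeniusNormedAddCommGroup frobeniusNormedSpace

theorem frobenius_norm_sq_eq_trace (A : Matrix n p ℝ) : ‖A‖ ^ 2 = (A * Aᵀ).trace := by
  rw [frobenius_norm_def, ← Real.sqrt_eq_rpow, Real.sq_sqrt (by positivity)]
  simp [trace, mul_apply, sq]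

theorem norm_le_sqrt_trace_sum_mul_transpose (C : ι → Matrix n p ℝ) :
    ‖C‖ ≤ √((∑ i, C i * (C i)ᵀ).trace) := by
  refine (pi_norm_le_iff_of_nonneg (Real.sqrt_nonneg _)).2 fun i => Real.le_sqrt_of_sq_le ?_
  rw [trace_sum, frobenius_norm_sq_eq_trace]
  exact Finset.single_le_sum (fun j _ => (posSemidef_mul_transpose_self (C j)).trace_nonneg)
    (Finset.mem_univ i)

theorem isClosed_psdCongrCone : IsClosed (psdCongrCone W : Set (Matrix n n ℝ)) := by
  have : CompactlyCoherentSpace (Matrix n n ℝ) :=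
    inferInstanceAs (CompactlyCoherentSpace (n → n → ℝ))
  have hC (i : ι) : Continuous fun C : piRangeMulLeft W => C.1 i :=
    (continuous_apply i).comp continuous_subtype_val
  rw [← range_sum_mul_transpose_piRangeMulLeft]
  have hF : Continuous fun C : piRangeMulLeft W => ∑ i, C.1 i * (C.1 i)ᵀ :=
    continuous_finsetSum _ fun i _ => (hC i).matrix_mul (hC i).matrix_transpose
  exact (isProperMap_of_norm_le hF continuous_id.matrix_trace.sqrt
    fun C => norm_le_sqrt_trace_sum_mul_transpose C.1).isClosedMap.isClosed_range

end Frobenius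

end Matrix

theorem minkowski_sum_faces_closed_cone_dual
    {d k m : ℕ} (W : Fin m → Matrix (Fin d) (Fin k) ℝ) :
    IsClosed {X : Matrix (Fin d) (Fin d) ℝ |
        ∃ Xi : Fin m → Matrix (Fin k) (Fin k) ℝ,
          (∀ i, (Xi i).PosSemidef) ∧ X = ∑ i, W i * Xi i * (W i)ᵀ} ∧
    Convex ℝ {X : Matrix (Fin d) (Fin d) ℝ |
        ∃ Xi : Fin m → Matrix (Fin k) (Fin k) ℝ,
          (∀ i, (Xi i).PosSemidef) ∧ X = ∑ i, W i * Xi i * (W i)ᵀ} ∧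
    (∀ X ∈ {X : Matrix (Fin d) (Fin d) ℝ |
        ∃ Xi : Fin m → Matrix (Fin k) (Fin k) ℝ,
          (∀ i, (Xi i).PosSemidef) ∧ X = ∑ i, W i * Xi i * (W i)ᵀ},
      ∀ a : ℝ, 0 ≤ a → a • X ∈ {X : Matrix (Fin d) (Fin d) ℝ |
        ∃ Xi : Fin m → Matrix (Fin k) (Fin k) ℝ,
          (∀ i, (Xi i).PosSemidef) ∧ X = ∑ i, W i * Xi i * (W i)ᵀ}) ∧
    ({Y : Matrix (Fin d) (Fin d) ℝ | Y.IsSymm ∧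
        ∀ X ∈ {X : Matrix (Fin d) (Fin d) ℝ |
          ∃ Xi : Fin m → Matrix (Fin k) (Fin k) ℝ,
            (∀ i, (Xi i).PosSemidef) ∧ X = ∑ i, W i * Xi i * (W i)ᵀ},
          0 ≤ (Y * X).trace} =
      {Y : Matrix (Fin d) (Fin d) ℝ | Y.IsSymm ∧
        ∀ i, ((W i)ᵀ * Y * W i).PosSemidef}) ∧
    ({X : Matrix (Fin d) (Fin d) ℝ |
        ∃ Xi : Fin m → Matrix (Fin k) (Fin k) ℝ,
          (∀ i, (Xi i).PosSemidef) ∧ X = ∑ i, W i * Xi i * (W i)ᵀ} ⊆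
      {X : Matrix (Fin d) (Fin d) ℝ | X.PosSemidef}) ∧
    ({X : Matrix (Fin d) (Fin d) ℝ | X.PosSemidef} ⊆
      {X : Matrix (Fin d) (Fin d) ℝ | X.IsSymm ∧
        ∀ i, ((W i)ᵀ * X * W i).PosSemidef}) := by
  refine ⟨isClosed_psdCongrCone W, (psdCongrCone W).convex,
    fun X hX a ha => (psdCongrCone W).smul_mem ha hX,
    Set.ext fun Y => and_congr_right (forall_psdCongrCone_trace_mul_nonneg_iff W),
    fun X => posSemidef_of_mem_psdCongrCone W,
    fun X hX => ⟨isHermitian_iff_isSymm.1 hX.isHermitian, fun i => hX.transpose_mul_mul_same (W i)⟩⟩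
end

section
/- Every matrix in DD^d is a nonnegative combination of matrices of the form w wᵀ, where w is a vector with at most two nonzero entries, each equal to ±1. -/
open Matrix Finset

private lemma sign_L1 (x : ℝ) : |x| / 2 * (Real.sign x * Real.sign x) = |x| / 2 := by
  rcases lt_trichotomy x 0 with h | h | h
  · rw [Real.sign_of_neg h]; ring
  · simp [h]
  · rw [Real.sign_of_pos h]; ring

private lemma sign_L2 (x : ℝ) : |x| / 2 * (1 * Real.sign x) = x / 2 := by
  rcases lt_trichotomy x 0 with h | h | h
  · rw [Real.sign_of_neg h, abs_of_neg h]; ring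
  · simp [h]
  · rw [Real.sign_of_pos h, abs_of_pos h]; ring

private lemma sign_L3 (x : ℝ) : |x| / 2 * (Real.sign x * 1) = x / 2 := by
  rw [mul_comm (Real.sign x) 1]; exact sign_L2 x

private lemma sign_cases' (x : ℝ) : Real.sign x = 0 ∨ Real.sign x = 1 ∨ Real.sign x = -1 := by
  rcases lt_trichotomy x 0 with h | h | h
  · exact Or.inr (Or.inr (Real.sign_of_neg h))
  · simp [h]
  · exact Or.inr (Or.inl (Real.sign_of_pos h))

theorem diagonally_dominant_extreme_rays
    {d : ℕ} (X : Matrix (Fin d) (Fin d) ℝ) (hsym : X.IsSymm)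
    (hdd : ∀ i, ∑ j ∈ Finset.univ.erase i, |X i j| ≤ X i i) :
    ∃ (m : ℕ) (c : Fin m → ℝ) (w : Fin m → Fin d → ℝ),
      (∀ i, 0 ≤ c i) ∧
      (∀ i, ((Finset.univ.filter fun j => w i j ≠ 0).card ≤ 2)) ∧
      (∀ i j, w i j = 0 ∨ w i j = 1 ∨ w i j = -1) ∧
      X = ∑ i, c i • Matrix.vecMulVec (w i) (w i) := by
  classical
  have hsymm : ∀ i j, X i j = X j i := fun i j => (hsym.apply i j).symm
  set cD : Fin d → ℝ := fun i => X i i - ∑ j ∈ Finset.univ.erase i, |X i j| with hcD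
  set wD : Fin d → Fin d → ℝ := fun i k => if k = i then 1 else 0 with hwD
  set g : Fin d → Fin d → ℝ := fun i j => if i = j then 0 else |X i j| / 2 with hg
  set wf : Fin d → Fin d → Fin d → ℝ :=
    fun i j k => if k = i then 1 else if k = j then Real.sign (X i j) else 0 with hwf
  have hgr : ∀ i j, g i j = if i = j then 0 else |X i j| / 2 := fun _ _ => rfl
  have hwDr : ∀ i k, wD i k = if k = i then 1 else 0 := fun _ _ => rfl
  have hwfr : ∀ i j k, wf i j k
      = if k = i then 1 else if k = j then Real.sign (X i j) else 0 := fun _ _ _ => rfl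
  set ι := Sum (Fin d) (Fin d × Fin d) with hι
  set e : Fin (Fintype.card ι) ≃ ι := (Fintype.equivFin ι).symm with he
  refine ⟨Fintype.card ι, (Sum.elim cD fun p => g p.1 p.2) ∘ e,
    (Sum.elim wD fun p => wf p.1 p.2) ∘ e, ?_, ?_, ?_, ?_⟩
  · intro i
    rcases h : e i with t | p
    · simp only [Function.comp_apply, h, Sum.elim_inl]
      exact sub_nonneg.mpr (hdd t)
    · simp only [Function.comp_apply, h, Sum.elim_inr]
      rw [hgr]
      split
      · exact le_refl 0
      · positivity
  · intro i
    rcases h : e i with t | p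
    · have hsub : (Finset.univ.filter fun j => ((Sum.elim wD fun p => wf p.1 p.2) ∘ e) i j ≠ 0)
          ⊆ {t} := by
        intro k hk
        simp only [mem_filter, Function.comp_apply, h, Sum.elim_inl] at hk
        by_contra hne
        simp only [mem_singleton] at hne
        exact hk.2 (by rw [hwDr, if_neg hne])
      calc _ ≤ ({t} : Finset (Fin d)).card := Finset.card_le_card hsub
        _ ≤ 2 := by simp
    · have hsub : (Finset.univ.filter fun j => ((Sum.elim wD fun q => wf q.1 q.2) ∘ e) i j ≠ 0)
          ⊆ {p.1, p.2} := by
        intro k hk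
        simp only [mem_filter, Function.comp_apply, h, Sum.elim_inr] at hk
        simp only [mem_insert, mem_singleton]
        by_contra hne
        push_neg at hne
        exact hk.2 (by rw [hwfr, if_neg hne.1, if_neg hne.2])
      calc _ ≤ ({p.1, p.2} : Finset (Fin d)).card := Finset.card_le_card hsub
        _ ≤ 2 := by
          calc _ ≤ ({p.2} : Finset (Fin d)).card + 1 := Finset.card_insert_le _ _
            _ ≤ 2 := by simp
  · intro i k
    rcases h : e i with t | p
    · simp only [Function.comp_apply, h, Sum.elim_inl]
      rw [hwDr]
      split
      · exact Or.inr (Or.inl rfl)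
      · exact Or.inl rfl
    · simp only [Function.comp_apply, h, Sum.elim_inr]
      rw [hwfr]
      split
      · exact Or.inr (Or.inl rfl)
      split
      · exact sign_cases' _
      · exact Or.inl rfl
  · have hmain : X = ∑ i, cD i • Matrix.vecMulVec (wD i) (wD i)
        + ∑ p : Fin d × Fin d, g p.1 p.2 • Matrix.vecMulVec (wf p.1 p.2) (wf p.1 p.2) := by
      ext a b
      rw [Matrix.add_apply, Matrix.sum_apply, Matrix.sum_apply]
      simp only [Matrix.smul_apply, Matrix.vecMulVec_apply, smul_eq_mul]
      rw [Fintype.sum_prod_type]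
      by_cases hab : a = b
      · subst hab
        have h1 : ∑ i, cD i * (wD i a * wD i a) = cD a := by
          rw [Finset.sum_eq_single a]
          · rw [hwDr, if_pos rfl]; ring
          · intro i _ hi
            rw [hwDr, if_neg (fun h : a = i => hi h.symm)]; ring
          · simp
        have h2 : ∀ i : Fin d, ∑ j, g i j * (wf i j a * wf i j a)
            = if i = a then ∑ j ∈ Finset.univ.erase a, |X a j| / 2 else |X i a| / 2 := by
          intro i
          by_cases hia : i = a
          · subst hia
            rw [if_pos rfl]
            rw [← Finset.sum_erase (Finset.univ) (f := fun j => g i j * (wf i j i * wf i j i))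
              (a := i) (by show g i i * (wf i i i * wf i i i) = 0; rw [hgr, if_pos rfl]; ring)]
            apply Finset.sum_congr rfl
            intro j hj
            have hji : j ≠ i := Finset.ne_of_mem_erase hj
            rw [hgr, if_neg (fun h : i = j => hji h.symm), hwfr, if_pos rfl]; ring
          · rw [if_neg hia]
            rw [Finset.sum_eq_single a]
            · rw [hwfr, if_neg (fun h : a = i => hia h.symm), if_pos rfl,
                hgr, if_neg hia]
              exact sign_L1 _
            · intro j _ hj
              rw [hwfr, if_neg (fun h : a = i => hia h.symm),
                if_neg (fun h : a = j => hj h.symm)]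
              ring
            · simp
        have h3 : ∑ i, ∑ j, g i j * (wf i j a * wf i j a)
            = ∑ j ∈ Finset.univ.erase a, |X a j| := by
          simp only [h2]
          rw [← Finset.add_sum_erase Finset.univ _ (Finset.mem_univ a), if_pos rfl]
          have heq : ∑ i ∈ Finset.univ.erase a,
              (if i = a then ∑ j ∈ Finset.univ.erase a, |X a j| / 2 else |X i a| / 2)
              = ∑ i ∈ Finset.univ.erase a, |X a i| / 2 := by
            apply Finset.sum_congr rfl
            intro i hi
            rw [if_neg (Finset.ne_of_mem_erase hi), hsymm i a]
          rw [heq, ← Finset.sum_add_distrib]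
          apply Finset.sum_congr rfl
          intro j _
          ring
        rw [h1, h3, hcD]
        ring
      · have h1 : ∑ i, cD i * (wD i a * wD i b) = 0 := by
          apply Finset.sum_eq_zero
          intro i _
          rcases ne_or_eq a i with h | h
          · rw [hwDr, if_neg h]; ring
          · subst h
            simp only [hwDr]
            rw [if_neg (fun h : b = a => hab h.symm)]; ring
        have h2 : ∀ i : Fin d, ∑ j, g i j * (wf i j a * wf i j b)
            = if i = a then X a b / 2 else if i = b then X a b / 2 else 0 := by
          intro i
          by_cases hia : i = a
          · subst hia
            rw [if_pos rfl, Finset.sum_eq_single b]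
            · rw [hwfr i b i, if_pos rfl, hwfr i b b,
                if_neg (fun h : b = i => hab h.symm), if_pos rfl, hgr, if_neg hab]
              exact sign_L2 _
            · intro j _ hj
              rw [hwfr i j b, if_neg (fun h : b = i => hab h.symm),
                if_neg (fun h : b = j => hj h.symm)]
              ring
            · simp
          · rw [if_neg hia]
            by_cases hib : i = b
            · subst hib
              rw [if_pos rfl, Finset.sum_eq_single a]
              · rw [hwfr i a i, if_pos rfl, hwfr i a a,
                  if_neg (fun h : a = i => hia h.symm), if_pos rfl, hgr,
                  if_neg (fun h : i = a => hia h), show X a i = X i a from hsymm a i]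
                exact sign_L3 _
              · intro j _ hj
                rw [hwfr i j a, if_neg (fun h : a = i => hia h.symm),
                  if_neg (fun h : a = j => hj h.symm)]
                ring
              · simp
            · rw [if_neg hib]
              apply Finset.sum_eq_zero
              intro j _
              rcases ne_or_eq a j with h | h
              · rw [hwfr i j a, if_neg (fun hh : a = i => hia hh.symm), if_neg h]
                ring
              · subst h
                rw [hwfr i a b, if_neg (fun hh : b = i => hib hh.symm),
                  if_neg (fun hh : b = a => hab hh.symm)]
                ring
        have h3 : ∑ i, ∑ j, g i j * (wf i j a * wf i j b) = X a b := by
          simp only [h2]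
          have heq : ∀ i : Fin d, (if i = a then X a b / 2 else if i = b then X a b / 2 else 0)
              = (if i = a then X a b / 2 else 0) + (if i = b then X a b / 2 else 0) := by
            intro i
            by_cases hia : i = a
            · subst hia
              rw [if_pos rfl, if_pos rfl, if_neg hab, add_zero]
            · rw [if_neg hia, if_neg hia, zero_add]
          simp only [heq]
          rw [Finset.sum_add_distrib, Finset.sum_ite_eq' Finset.univ a,
            Finset.sum_ite_eq' Finset.univ b, if_pos (Finset.mem_univ a),
            if_pos (Finset.mem_univ b)]
          ring
        rw [h1, h3, zero_add]
    calc X = ∑ t : ι, (Sum.elim cD fun p => g p.1 p.2) t •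
          Matrix.vecMulVec ((Sum.elim wD fun p => wf p.1 p.2) t)
            ((Sum.elim wD fun p => wf p.1 p.2) t) := by
          rw [Fintype.sum_sum_type]
          exact hmain
      _ = _ := (Equiv.sum_comp e fun t => (Sum.elim cD fun p => g p.1 p.2) t •
          Matrix.vecMulVec ((Sum.elim wD fun p => wf p.1 p.2) t)
            ((Sum.elim wD fun p => wf p.1 p.2) t)).symm
end

section
/- Let T ⊆ S^d be a subspace and C(W)* = { Σᵢ Wᵢ Xᵢ Wᵢᵀ : Xᵢ ∈ S^k_+ } for d×k matrices W_1,...,W_m. If X* = Σᵢ Wᵢ Xᵢ* Wᵢᵀ maximizes Σᵢ rank(Xᵢ) over T ∩ C(W)*, then X* maximizes rank(X) over T ∩ C(W)*; in fact null(X*) ⊆ null(X) for every X ∈ T ∩ C(W)*. -/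
/-!
The competitor `X = ∑ Wᵢ Xᵢ Wᵢᵀ` can be added to `X*`: the point `X* + X` lies in `T` with blocks
`Xᵢ* + Xᵢ`. For positive semidefinite `A`, `B` one has `ker (A + B) = ker A ⊓ ker B`, so
`rank Xᵢ* ≤ rank (Xᵢ* + Xᵢ)`, and maximality of `∑ rank Xᵢ*` forces equality in every block, i.e.
`ker Xᵢ* ≤ ker Xᵢ`. Since `ker (∑ Wᵢ Aᵢ Wᵢᵀ) = ⨅ (Wᵢᵀ)⁻¹ (ker Aᵢ)` for positive semidefinite `Aᵢ`,
these block inclusions give `ker X* ≤ ker X`, and rank–nullity gives `rank X ≤ rank X*`.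
-/

open Matrix

namespace Matrix

section Rank

variable {l m n K : Type*} [Fintype n] [Field K]

theorem finrank_ker_mulVecLin_add_rank (A : Matrix m n K) :
    Module.finrank K (LinearMap.ker A.mulVecLin) + A.rank = Fintype.card n := by
  rw [rank, add_comm, LinearMap.finrank_range_add_finrank_ker, Module.finrank_fintype_fun_eq_card]

theorem rank_le_rank_of_ker_le {A : Matrix m n K} {B : Matrix l n K}
    (h : LinearMap.ker A.mulVecLin ≤ LinearMap.ker B.mulVecLin) : B.rank ≤ A.rank := by
  have := Submodule.finrank_mono h
  have := A.finrank_ker_mulVecLin_add_rank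
  have := B.finrank_ker_mulVecLin_add_rank
  omega

theorem ker_eq_of_ker_le_of_rank_le {A : Matrix m n K} {B : Matrix l n K}
    (h : LinearMap.ker A.mulVecLin ≤ LinearMap.ker B.mulVecLin) (hr : A.rank ≤ B.rank) :
    LinearMap.ker A.mulVecLin = LinearMap.ker B.mulVecLin := by
  refine Submodule.eq_of_le_of_finrank_le h ?_
  have := A.finrank_ker_mulVecLin_add_rank
  have := B.finrank_ker_mulVecLin_add_rank
  omega

end Rank

section PosSemidef

open scoped ComplexOrder

variable {m n 𝕜 : Type*} [Fintype m] [Fintype n] [RCLike 𝕜]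

namespace PosSemidef

variable {A B : Matrix n n 𝕜}

theorem ker_add (hA : A.PosSemidef) (hB : B.PosSemidef) :
    LinearMap.ker (A + B).mulVecLin = LinearMap.ker A.mulVecLin ⊓ LinearMap.ker B.mulVecLin := by
  ext v
  simp only [Submodule.mem_inf, LinearMap.mem_ker, mulVecLin_apply]
  rw [← hA.dotProduct_mulVec_zero_iff, ← hB.dotProduct_mulVec_zero_iff,
    ← (hA.add hB).dotProduct_mulVec_zero_iff, add_mulVec, dotProduct_add]
  exact add_eq_zero_iff_of_nonneg (hA.dotProduct_mulVec_nonneg v) (hB.dotProduct_mulVec_nonneg v)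

theorem ker_sum {ι : Type*} {s : Finset ι} {A : ι → Matrix n n 𝕜}
    (hA : ∀ i ∈ s, (A i).PosSemidef) :
    LinearMap.ker (∑ i ∈ s, A i).mulVecLin = ⨅ i ∈ s, LinearMap.ker (A i).mulVecLin := by
  classical
  induction s using Finset.induction_on with
  | empty => simp
  | insert j s hj ih =>
    rw [Finset.sum_insert hj, Finset.iInf_insert,
      (hA j (s.mem_insert_self j)).ker_add (posSemidef_sum s fun i hi ↦ hA i (by simp [hi])),
      ih fun i hi ↦ hA i (by simp [hi])]

theorem ker_mul_mul_conjTranspose (hA : A.PosSemidef) (W : Matrix m n 𝕜) :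
    LinearMap.ker (W * A * Wᴴ).mulVecLin = (LinearMap.ker A.mulVecLin).comap Wᴴ.mulVecLin := by
  ext v
  simp only [LinearMap.mem_ker, Submodule.mem_comap, mulVecLin_apply,
    ← (hA.mul_mul_conjTranspose_same W).dotProduct_mulVec_zero_iff, ← hA.dotProduct_mulVec_zero_iff]
  rw [← mulVec_mulVec, ← mulVec_mulVec, dotProduct_mulVec, star_mulVec, conjTranspose_conjTranspose]

theorem rank_le_rank_add (hA : A.PosSemidef) (hB : B.PosSemidef) : A.rank ≤ (A + B).rank :=
  rank_le_rank_of_ker_le (hA.ker_add hB ▸ inf_le_left)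

theorem ker_le_ker_of_rank_add_le (hA : A.PosSemidef) (hB : B.PosSemidef)
    (h : (A + B).rank ≤ A.rank) : LinearMap.ker A.mulVecLin ≤ LinearMap.ker B.mulVecLin := by
  have hker := ker_eq_of_ker_le_of_rank_le (hA.ker_add hB ▸ inf_le_left) h
  rw [hA.ker_add hB] at hker
  exact hker ▸ inf_le_right

end PosSemidef

theorem ker_sum_mul_mul_conjTranspose {ι : Type*} {s : Finset ι} {A : ι → Matrix n n 𝕜}
    (hA : ∀ i ∈ s, (A i).PosSemidef) (W : ι → Matrix m n 𝕜) :
    LinearMap.ker (∑ i ∈ s, W i * A i * (W i)ᴴ).mulVecLin =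
      ⨅ i ∈ s, (LinearMap.ker (A i).mulVecLin).comap (W i)ᴴ.mulVecLin := by
  rw [PosSemidef.ker_sum fun i hi ↦ (hA i hi).mul_mul_conjTranspose_same (W i)]
  exact iInf_congr fun i ↦ iInf_congr fun hi ↦ (hA i hi).ker_mul_mul_conjTranspose (W i)

end PosSemidef

end Matrix

theorem max_sum_rank_implies_max_rank
    {d k m : ℕ} (W : Fin m → Matrix (Fin d) (Fin k) ℝ)
    (T : Submodule ℝ (Matrix (Fin d) (Fin d) ℝ))
    (Xstar : Matrix (Fin d) (Fin d) ℝ)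
    (Xis : Fin m → Matrix (Fin k) (Fin k) ℝ)
    (hXT : Xstar ∈ T)
    (hXis : ∀ i, (Xis i).PosSemidef)
    (hdecomp : Xstar = ∑ i, W i * Xis i * (W i)ᵀ)
    (hmax : ∀ X ∈ T, ∀ Xi : Fin m → Matrix (Fin k) (Fin k) ℝ,
      (∀ i, (Xi i).PosSemidef) → X = ∑ i, W i * Xi i * (W i)ᵀ →
        ∑ i, (Xi i).rank ≤ ∑ i, (Xis i).rank) :
    ∀ X ∈ T, ∀ Xi : Fin m → Matrix (Fin k) (Fin k) ℝ,
      (∀ i, (Xi i).PosSemidef) → X = ∑ i, W i * Xi i * (W i)ᵀ →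
        LinearMap.ker Xstar.mulVecLin ≤ LinearMap.ker X.mulVecLin ∧
        X.rank ≤ Xstar.rank := by
  intro X hX Xi hXi hXdecomp
  have hsum := hmax (Xstar + X) (T.add_mem hXT hX) (fun i ↦ Xis i + Xi i)
    (fun i ↦ (hXis i).add (hXi i))
    (by simp only [hdecomp, hXdecomp, Matrix.mul_add, Matrix.add_mul, Finset.sum_add_distrib])
  have hle : ∀ i ∈ Finset.univ, (Xis i).rank ≤ (Xis i + Xi i).rank :=
    fun i _ ↦ (hXis i).rank_le_rank_add (hXi i)
  have hrank : ∀ i ∈ Finset.univ, (Xis i).rank = (Xis i + Xi i).rank :=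
    (Finset.sum_eq_sum_iff_of_le hle).mp (le_antisymm (Finset.sum_le_sum hle) hsum)
  have hker : LinearMap.ker Xstar.mulVecLin ≤ LinearMap.ker X.mulVecLin := by
    simp only [hdecomp, hXdecomp, ← conjTranspose_eq_transpose_of_trivial,
      ker_sum_mul_mul_conjTranspose fun i _ ↦ hXis i, ker_sum_mul_mul_conjTranspose fun i _ ↦ hXi i]
    exact iInf₂_mono fun i hi ↦ Submodule.comap_mono <|
      (hXis i).ker_le_ker_of_rank_add_le (hXi i) (hrank i hi).ge
  exact ⟨hker, rank_le_rank_of_ker_le hker⟩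
end

section
/- Let (U, V) be an invertible n×n matrix with UᵀV = 0, S = VVᵀ, and F = S^n_+ ∩ S^⊥ = U S^d_+ Uᵀ where U has d columns. A matrix X = (U,V) [[W, Z],[Zᵀ, R]] (U,V)ᵀ with W ∈ S^d_+ belongs to S^n_+ + span(S) if and only if null(W) ⊆ null(Zᵀ). -/
/-!
Conjugating by the invertible matrix `P = (U, V)` turns `S` into the block matrix whose only
nonzero block is an identity in the lower right corner, so `X ∈ S₊ + span S` says that
`[[W, Z], [Zᵀ, R - α I]]` is positive semidefinite for some `α`. If it is, every `(x, 0)` with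
`W x = 0` is isotropic, hence in the kernel, which forces `Zᵀ x = 0`. Conversely
`ker W ≤ ker Zᵀ` means `Z = W B` for some `B`; the block matrix is then `[I, B]ᵀ W [I, B]` plus a
lower right block `R - Bᵀ W B - α I`, which is positive semidefinite once `-α` exceeds the
spectrum of `R - Bᵀ W B`.
-/

open Matrix

theorem LinearMap.exists_comp_eq_of_ker_le {K V₁ V₂ V₃ : Type*} [Field K]
    [AddCommGroup V₁] [AddCommGroup V₂] [AddCommGroup V₃]
    [Module K V₁] [Module K V₂] [Module K V₃]
    {f : V₁ →ₗ[K] V₂} {g : V₁ →ₗ[K] V₃} (h : ker f ≤ ker g) :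
    ∃ h' : V₂ →ₗ[K] V₃, h' ∘ₗ f = g := by
  obtain ⟨h', hh'⟩ := LinearMap.exists_extend
    ((ker f).liftQ g h ∘ₗ (f.quotKerEquivRange.symm : range f →ₗ[K] V₁ ⧸ ker f))
  refine ⟨h', LinearMap.ext fun x => ?_⟩
  have := congr($hh' ⟨f x, mem_range_self f x⟩)
  simpa [LinearMap.quotKerEquivRange_symm_apply_image] using this

namespace Matrix

theorem exists_mul_eq_of_ker_le {K l m n : Type*} [Field K] [Fintype n] [Fintype l]
    [DecidableEq n] [DecidableEq l] {A : Matrix l n K} {B : Matrix m n K}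
    (h : LinearMap.ker A.mulVecLin ≤ LinearMap.ker B.mulVecLin) :
    ∃ C : Matrix m l K, B = C * A := by
  obtain ⟨f, hf⟩ := LinearMap.exists_comp_eq_of_ker_le h
  refine ⟨LinearMap.toMatrix' f, toLin'.injective ?_⟩
  rw [toLin'_mul, toLin'_toMatrix', toLin'_apply', toLin'_apply', hf]

open scoped ComplexOrder
variable {𝕜 n m : Type*} [RCLike 𝕜] [Fintype n] [Fintype m]

theorem IsHermitian.exists_posSemidef_add_smul_one [DecidableEq n] {T : Matrix n n 𝕜}
    (hT : T.IsHermitian) : ∃ c : ℝ, (T + c • 1).PosSemidef := by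
  set U : Matrix n n 𝕜 := ↑hT.eigenvectorUnitary
  set e := hT.eigenvalues
  have hTU : T = U * diagonal (RCLike.ofReal ∘ e) * star U := hT.spectral_theorem
  have hU : U * star U = 1 := Unitary.coe_mul_star_self _
  have hshift (c : ℝ) : T + c • 1 = U * diagonal (fun i => ((e i + c : ℝ) : 𝕜)) * star U := by
    have : diagonal (fun i => ((e i + c : ℝ) : 𝕜)) = diagonal (RCLike.ofReal ∘ e) + c • 1 := by
      ext i j
      by_cases h : i = j <;> simp [diagonal, h, Algebra.algebraMap_eq_smul_one, add_smul]
    rw [this, mul_add, add_mul, ← hTU, mul_smul_comm, smul_mul_assoc, mul_one, hU]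
  refine ⟨∑ i, |e i|, ?_⟩
  rw [hshift, (Unitary.isUnit_coe (U := hT.eigenvectorUnitary)).posSemidef_star_right_conjugate_iff,
    posSemidef_diagonal_iff]
  intro i
  have := Finset.single_le_sum (f := fun j => |e j|) (fun j _ => abs_nonneg _) (Finset.mem_univ i)
  rw [RCLike.ofReal_nonneg]
  linarith [neg_abs_le (e i)]

theorem PosSemidef.ker_le_ker_of_fromBlocks {A : Matrix n n 𝕜} {B : Matrix n m 𝕜}
    {C : Matrix m n 𝕜} {D : Matrix m m 𝕜} (h : (fromBlocks A B C D).PosSemidef) :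
    LinearMap.ker A.mulVecLin ≤ LinearMap.ker C.mulVecLin := by
  intro x (hx : A *ᵥ x = 0)
  have hv : fromBlocks A B C D *ᵥ Sum.elim x 0 = Sum.elim (0 : n → 𝕜) (C *ᵥ x) := by
    simp [fromBlocks_mulVec, hx]
  have hq : star (Sum.elim x 0) ⬝ᵥ fromBlocks A B C D *ᵥ Sum.elim x 0 = 0 := by
    simp [hv, dotProduct, Fintype.sum_sum_type]
  rw [h.dotProduct_mulVec_zero_iff, hv] at hq
  exact funext fun i => by simpa using congr_fun hq (Sum.inr i)

theorem PosSemidef.fromBlocks_mul [DecidableEq n] {A : Matrix n n 𝕜} (hA : A.PosSemidef)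
    (B : Matrix n m 𝕜) : (fromBlocks A (A * B) (Bᴴ * A) (Bᴴ * A * B)).PosSemidef := by
  simpa [conjTranspose_fromCols_eq_fromRows_conjTranspose, fromRows_mul, fromRows_mul_fromCols]
    using hA.conjTranspose_mul_mul_same (fromCols (1 : Matrix n n 𝕜) B)

theorem PosSemidef.fromBlocks_zero [DecidableEq m] {D : Matrix m m 𝕜} (hD : D.PosSemidef) :
    (fromBlocks (0 : Matrix n n 𝕜) 0 0 D).PosSemidef := by
  convert hD.conjTranspose_mul_mul_same (fromCols (0 : Matrix m n 𝕜) (1 : Matrix m m 𝕜)) using 1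
  rw [conjTranspose_fromCols_eq_fromRows_conjTranspose, fromRows_mul, fromRows_mul_fromCols]
  simp

theorem exists_posSemidef_fromBlocks_sub_smul_one_iff [DecidableEq n] [DecidableEq m]
    {W : Matrix n n 𝕜} (hW : W.PosSemidef) (Z : Matrix n m 𝕜) {R : Matrix m m 𝕜}
    (hR : R.IsHermitian) :
    (∃ α : ℝ, (fromBlocks W Z Zᴴ (R - α • 1)).PosSemidef) ↔
      LinearMap.ker W.mulVecLin ≤ LinearMap.ker Zᴴ.mulVecLin := by
  refine ⟨fun ⟨α, h⟩ => h.ker_le_ker_of_fromBlocks, fun hker => ?_⟩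
  obtain ⟨B, rfl⟩ : ∃ B : Matrix n m 𝕜, Z = W * B := by
    obtain ⟨C, hC⟩ := exists_mul_eq_of_ker_le hker
    exact ⟨Cᴴ, by rw [← conjTranspose_conjTranspose Z, hC, conjTranspose_mul, hW.isHermitian.eq]⟩
  have hBWB : (Bᴴ * W * B).IsHermitian := isHermitian_conjTranspose_mul_mul B hW.isHermitian
  obtain ⟨c, hc⟩ := (hR.sub hBWB).exists_posSemidef_add_smul_one
  refine ⟨-c, ?_⟩
  have hsplit : fromBlocks W (W * B) (W * B)ᴴ (R - (-c) • 1) =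
      fromBlocks W (W * B) (Bᴴ * W) (Bᴴ * W * B) + fromBlocks 0 0 0 (R - Bᴴ * W * B + c • 1) := by
    rw [fromBlocks_add, conjTranspose_mul, hW.isHermitian.eq, neg_smul, sub_neg_eq_add]
    congr 1 <;> abel
  rw [hsplit]
  exact (hW.fromBlocks_mul B).add hc.fromBlocks_zero

end Matrix

theorem mem_psd_add_span_iff_general
    {d m : ℕ} (P : Matrix (Fin d ⊕ Fin m) (Fin d ⊕ Fin m) ℝ)
    (hP : IsUnit P)
    (V : Matrix (Fin d ⊕ Fin m) (Fin m) ℝ)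
    (hV : ∀ i j, V i j = P i (Sum.inr j))
    (S : Matrix (Fin d ⊕ Fin m) (Fin d ⊕ Fin m) ℝ)
    (hS : S = V * Vᵀ)
    (W : Matrix (Fin d) (Fin d) ℝ) (hW : W.PosSemidef)
    (Z : Matrix (Fin d) (Fin m) ℝ)
    (R : Matrix (Fin m) (Fin m) ℝ) (hR : R.IsSymm)
    (X : Matrix (Fin d ⊕ Fin m) (Fin d ⊕ Fin m) ℝ)
    (hX : X = P * Matrix.fromBlocks W Z Zᵀ R * Pᵀ) :
    (∃ Y : Matrix (Fin d ⊕ Fin m) (Fin d ⊕ Fin m) ℝ, Y.PosSemidef ∧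
        ∃ α : ℝ, X = Y + α • S) ↔
      LinearMap.ker W.mulVecLin ≤ LinearMap.ker Zᵀ.mulVecLin := by
  set E : Matrix (Fin d ⊕ Fin m) (Fin m) ℝ := fromRows 0 1
  have hVP : V = P * E := by
    ext i j
    simp [E, hV, mul_apply, Fintype.sum_sum_type, one_apply]
  have hSP : S = P * fromBlocks 0 0 0 1 * Pᵀ := by
    have hE : E * Eᵀ = fromBlocks 0 0 0 1 := by
      rw [transpose_fromRows, fromRows_mul_fromCols]
      simp
    rw [hS, hVP, Matrix.transpose_mul, ← hE]
    simp only [Matrix.mul_assoc]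
  have hXS (α : ℝ) : X - α • S = P * fromBlocks W Z Zᵀ (R - α • 1) * Pᵀ := by
    have : fromBlocks W Z Zᵀ (R - α • 1) = fromBlocks W Z Zᵀ R - α • fromBlocks 0 0 0 1 := by
      ext (i | i) (j | j) <;> simp
    rw [hX, hSP, this, Matrix.mul_sub, Matrix.sub_mul, mul_smul_comm, smul_mul_assoc]
  have hRh : R.IsHermitian := by rwa [IsHermitian, conjTranspose_eq_transpose_of_trivial]
  calc (∃ Y : Matrix (Fin d ⊕ Fin m) (Fin d ⊕ Fin m) ℝ, Y.PosSemidef ∧ ∃ α : ℝ, X = Y + α • S)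
      ↔ ∃ α : ℝ, (X - α • S).PosSemidef :=
        ⟨fun ⟨Y, hY, α, h⟩ => ⟨α, by rwa [h, add_sub_cancel_right]⟩,
          fun ⟨α, h⟩ => ⟨_, h, α, (sub_add_cancel _ _).symm⟩⟩
    _ ↔ ∃ α : ℝ, (fromBlocks W Z Zᴴ (R - α • 1)).PosSemidef := by
        simp_rw [hXS, ← conjTranspose_eq_transpose_of_trivial, ← star_eq_conjTranspose,
          hP.posSemidef_star_right_conjugate_iff]
    _ ↔ _ := by
        rw [exists_posSemidef_fromBlocks_sub_smul_one_iff hW Z hRh,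
          conjTranspose_eq_transpose_of_trivial]

theorem mem_psd_add_span_iff
    {d m : ℕ} (P : Matrix (Fin d ⊕ Fin m) (Fin d ⊕ Fin m) ℝ)
    (hP : IsUnit P)
    (U : Matrix (Fin d ⊕ Fin m) (Fin d) ℝ)
    (V : Matrix (Fin d ⊕ Fin m) (Fin m) ℝ)
    (hU : ∀ i j, U i j = P i (Sum.inl j))
    (hV : ∀ i j, V i j = P i (Sum.inr j))
    (hUV : Uᵀ * V = 0)
    (S : Matrix (Fin d ⊕ Fin m) (Fin d ⊕ Fin m) ℝ)
    (hS : S = V * Vᵀ)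
    (W : Matrix (Fin d) (Fin d) ℝ) (hW : W.PosSemidef)
    (Z : Matrix (Fin d) (Fin m) ℝ)
    (R : Matrix (Fin m) (Fin m) ℝ) (hR : R.IsSymm)
    (X : Matrix (Fin d ⊕ Fin m) (Fin d ⊕ Fin m) ℝ)
    (hX : X = P * Matrix.fromBlocks W Z Zᵀ R * Pᵀ) :
    (∃ Y : Matrix (Fin d ⊕ Fin m) (Fin d ⊕ Fin m) ℝ, Y.PosSemidef ∧
        ∃ α : ℝ, X = Y + α • S) ↔
      LinearMap.ker W.mulVecLin ≤ LinearMap.ker Zᵀ.mulVecLin :=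
  mem_psd_add_span_iff_general P hP V hV S hS W hW Z R hR X hX
end

section
/- The cone S^n_+ + span(S) is closed if and only if S is the zero matrix or S is positive definite, for S ∈ S^n_+. -/
/-!
If `S` is positive definite, a large multiple of `S` dominates any symmetric matrix, so the
cone is the closed subspace of symmetric matrices; if `S = 0` it is the positive semidefinite
cone itself. Otherwise take `v ≠ 0` with `S v = 0` and `u = S z ≠ 0`, and put
`W = u vᵀ + v uᵀ`. Congruence of `S` by `1 + c z vᵀ` shows that `W + c (zᵀ S z) v vᵀ`
lies in the cone for every `c > 0`, so `W` is in its closure. But `W = Y + α S` with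
`Y ⪰ 0` is impossible: `vᵀ Y v = vᵀ W v = 0` forces `Y v = 0`, whereas
`Y v = W v = ‖v‖² u ≠ 0`.
-/

open Matrix Filter Topology

namespace Matrix

variable {ι : Type*}

def posSemidefAddSpan (S : Matrix ι ι ℝ) : Set (Matrix ι ι ℝ) :=
  {X | ∃ Y : Matrix ι ι ℝ, Y.PosSemidef ∧ ∃ α : ℝ, X = Y + α • S}

theorem posSemidefAddSpan_zero : posSemidefAddSpan (0 : Matrix ι ι ℝ) = {X | X.PosSemidef} := by
  ext X
  simp [posSemidefAddSpan]

theorem isClosed_setOf_isHermitian : IsClosed {X : Matrix ι ι ℝ | X.IsHermitian} :=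
  isClosed_eq continuous_id.matrix_conjTranspose continuous_id

variable [Fintype ι]

theorem isClosed_setOf_posSemidef : IsClosed {X : Matrix ι ι ℝ | X.PosSemidef} := by
  have hquad (x : ι → ℝ) : Continuous fun X : Matrix ι ι ℝ => star x ⬝ᵥ X *ᵥ x := by
    simp only [dotProduct, mulVec]
    fun_prop
  have hset : {X : Matrix ι ι ℝ | X.PosSemidef} =
      {X | X.IsHermitian} ∩ ⋂ x : ι → ℝ, {X | 0 ≤ star x ⬝ᵥ X *ᵥ x} := by
    ext X
    simp only [posSemidef_iff_dotProduct_mulVec, Set.mem_ofPred_eq, Set.mem_inter_iff,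
      Set.mem_iInter]
  rw [hset]
  exact isClosed_setOf_isHermitian.inter <|
    isClosed_iInter fun x => isClosed_le continuous_const (hquad x)

section PosDef

open scoped MatrixOrder

variable [DecidableEq ι]

theorem PosDef.exists_pos_smul_one_le {S : Matrix ι ι ℝ} (hS : S.PosDef) :
    ∃ r > (0 : ℝ), r • (1 : Matrix ι ι ℝ) ≤ S := by
  have hspec : ∀ x ∈ spectrum ℝ S, 0 < x :=
    (StarOrderedRing.isStrictlyPositive_iff_spectrum_pos S hS.isHermitian).mp
      hS.isStrictlyPositive
  obtain ⟨r, hr, hle⟩ :=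
    S.finite_real_spectrum.isCompact.exists_forall_le' continuousOn_id hspec
  refine ⟨r, hr, ?_⟩
  rw [← Algebra.algebraMap_eq_smul_one]
  exact (algebraMap_le_iff_le_spectrum hS.isHermitian).mpr hle

theorem IsHermitian.exists_le_smul_one {X : Matrix ι ι ℝ} (hX : X.IsHermitian) :
    ∃ R ≥ (0 : ℝ), X ≤ R • (1 : Matrix ι ι ℝ) := by
  obtain ⟨R, hR⟩ := X.finite_real_spectrum.bddAbove
  refine ⟨max R 0, le_max_right _ _, ?_⟩
  rw [← Algebra.algebraMap_eq_smul_one]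
  exact (le_algebraMap_iff_spectrum_le hX).mpr fun x hx => (hR hx).trans (le_max_left _ _)

theorem PosDef.exists_posSemidef_add_smul {S X : Matrix ι ι ℝ} (hS : S.PosDef)
    (hX : X.IsHermitian) : ∃ β : ℝ, (X + β • S).PosSemidef := by
  obtain ⟨r, hr, hrS⟩ := hS.exists_pos_smul_one_le
  obtain ⟨R, hR, hXR⟩ := hX.neg.exists_le_smul_one
  refine ⟨R / r, ?_⟩
  rw [← nonneg_iff_posSemidef, ← neg_le_iff_add_nonneg']
  calc -X ≤ R • 1 := hXR
    _ = (R / r) • r • 1 := by rw [smul_smul, div_mul_cancel₀ _ hr.ne']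
    _ ≤ (R / r) • S := by gcongr

theorem PosDef.posSemidefAddSpan_eq {S : Matrix ι ι ℝ} (hS : S.PosDef) :
    posSemidefAddSpan S = {X | X.IsHermitian} := by
  ext X
  constructor
  · rintro ⟨Y, hY, α, rfl⟩
    exact hY.isHermitian.add (hS.isHermitian.smul (IsSelfAdjoint.all α))
  · intro hX
    obtain ⟨β, hβ⟩ := hS.exists_posSemidef_add_smul hX
    exact ⟨X + β • S, hβ, -β, by module⟩

end PosDef

theorem IsSymm.vecMul_eq_mulVec {R : Type*} [CommSemiring R] {S : Matrix ι ι R} (hS : S.IsSymm)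
    (z : ι → R) : z ᵥ* S = S *ᵥ z := by
  rw [← mulVec_transpose, hS.eq]

theorem exists_mulVec_ne_zero_of_ne_zero {m R : Type*} [Semiring R] {A : Matrix m ι R}
    (hA : A ≠ 0) : ∃ z, A *ᵥ z ≠ 0 := by
  classical
  by_contra! h
  exact hA (ext_of_mulVec_single fun i => by rw [h, zero_mulVec])

theorem transpose_one_add_vecMulVec_mul_mul [DecidableEq ι] {R : Type*} [CommRing R]
    {S : Matrix ι ι R} (hS : S.IsSymm) (z v : ι → R) (c : R) :
    (1 + c • vecMulVec z v)ᵀ * S * (1 + c • vecMulVec z v) =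
      S + c • (vecMulVec (S *ᵥ z) v + vecMulVec v (S *ᵥ z)) +
        (c ^ 2 * (z ⬝ᵥ S *ᵥ z)) • vecMulVec v v := by
  simp only [transpose_add, transpose_one, transpose_smul, transpose_vecMulVec, add_mul, mul_add,
    one_mul, mul_one, Matrix.smul_mul, Matrix.mul_smul, vecMulVec_mul, mul_vecMulVec,
    hS.vecMul_eq_mulVec, dotProduct_comm (S *ᵥ z) z, smul_mulVec, vecMulVec_mulVec,
    op_smul_eq_smul, smul_vecMulVec]
  module

section NotPosDef

variable {S : Matrix ι ι ℝ}

theorem PosSemidef.add_smul_vecMulVec_mem_posSemidefAddSpan (hS : S.PosSemidef)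
    (z v : ι → ℝ) {c : ℝ} (hc : 0 < c) :
    vecMulVec (S *ᵥ z) v + vecMulVec v (S *ᵥ z) + (c * (z ⬝ᵥ S *ᵥ z)) • vecMulVec v v ∈
      posSemidefAddSpan S := by
  classical
  have hconj :=
    (hS.conjTranspose_mul_mul_same (1 + c • vecMulVec z v)).smul (inv_pos.mpr hc).le
  rw [conjTranspose_eq_transpose_of_trivial,
    transpose_one_add_vecMulVec_mul_mul (isHermitian_iff_isSymm.mp hS.isHermitian)] at hconj
  refine ⟨_, hconj, -c⁻¹, ?_⟩
  match_scalars <;> field_simp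
  ring

theorem PosSemidef.vecMulVec_add_vecMulVec_mem_closure (hS : S.PosSemidef) (z v : ι → ℝ) :
    vecMulVec (S *ᵥ z) v + vecMulVec v (S *ᵥ z) ∈ closure (posSemidefAddSpan S) := by
  set W := vecMulVec (S *ᵥ z) v + vecMulVec v (S *ᵥ z)
  have hcont : Continuous fun c : ℝ => W + (c * (z ⬝ᵥ S *ᵥ z)) • vecMulVec v v := by fun_prop
  have hlim : Tendsto (fun c : ℝ => W + (c * (z ⬝ᵥ S *ᵥ z)) • vecMulVec v v) (𝓝[>] 0) (𝓝 W) := by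
    simpa using tendsto_nhdsWithin_of_tendsto_nhds (hcont.tendsto 0)
  exact mem_closure_of_tendsto hlim <| eventually_nhdsWithin_of_forall fun c hc =>
    hS.add_smul_vecMulVec_mem_posSemidefAddSpan z v hc

theorem PosSemidef.vecMulVec_add_vecMulVec_notMem_posSemidefAddSpan (hS : S.PosSemidef)
    {z v : ι → ℝ} (hz : S *ᵥ z ≠ 0) (hv : v ≠ 0) (hSv : S *ᵥ v = 0) :
    vecMulVec (S *ᵥ z) v + vecMulVec v (S *ᵥ z) ∉ posSemidefAddSpan S := by
  rintro ⟨Y, hY, α, hW⟩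
  have huv : S *ᵥ z ⬝ᵥ v = 0 := by
    rw [dotProduct_comm, dotProduct_mulVec,
      (isHermitian_iff_isSymm.mp hS.isHermitian).vecMul_eq_mulVec, hSv, zero_dotProduct]
  have hYv : Y *ᵥ v = (v ⬝ᵥ v) • S *ᵥ z := by
    have := congrArg (· *ᵥ v) hW
    simp only [add_mulVec, vecMulVec_mulVec, op_smul_eq_smul, smul_mulVec, hSv, huv,
      smul_zero, zero_smul, add_zero] at this
    exact this.symm
  have hYv0 : Y *ᵥ v = 0 := by
    rw [← hY.dotProduct_mulVec_zero_iff, star_trivial, hYv, dotProduct_smul,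
      dotProduct_comm v (S *ᵥ z), huv, smul_zero]
  rw [hYv, smul_eq_zero] at hYv0
  exact hYv0.elim (fun h => hv (dotProduct_self_eq_zero.mp h)) hz

theorem PosSemidef.exists_mulVec_eq_zero_of_not_posDef (hS : S.PosSemidef) (hSd : ¬S.PosDef) :
    ∃ v ≠ 0, S *ᵥ v = 0 := by
  classical
  rw [hS.posDef_iff_det_ne_zero, not_not] at hSd
  exact exists_mulVec_eq_zero_iff.mpr hSd

theorem PosSemidef.not_isClosed_posSemidefAddSpan (hS : S.PosSemidef) (hS0 : S ≠ 0)
    (hSd : ¬S.PosDef) : ¬IsClosed (posSemidefAddSpan S) := by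
  intro hclosed
  obtain ⟨z, hz⟩ := exists_mulVec_ne_zero_of_ne_zero hS0
  obtain ⟨v, hv, hSv⟩ := hS.exists_mulVec_eq_zero_of_not_posDef hSd
  exact hS.vecMulVec_add_vecMulVec_notMem_posSemidefAddSpan hz hv hSv <|
    hclosed.closure_subset (hS.vecMulVec_add_vecMulVec_mem_closure z v)

end NotPosDef

end Matrix

theorem psd_add_span_closed_iff
    {n : ℕ} (S : Matrix (Fin n) (Fin n) ℝ) (hS : S.PosSemidef) :
    IsClosed {X : Matrix (Fin n) (Fin n) ℝ |
        ∃ Y : Matrix (Fin n) (Fin n) ℝ, Y.PosSemidef ∧ ∃ α : ℝ, X = Y + α • S} ↔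
      S = 0 ∨ S.PosDef := by
  change IsClosed (posSemidefAddSpan S) ↔ _
  constructor
  · intro hclosed
    by_contra! h
    exact hS.not_isClosed_posSemidefAddSpan h.1 h.2 hclosed
  · rintro (rfl | hSd)
    · rw [posSemidefAddSpan_zero]
      exact isClosed_setOf_posSemidef
    · rw [hSd.posSemidefAddSpan_eq]
      exact isClosed_setOf_isHermitian
end
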